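/- arXiv:1605.03205 — 3 statements merged into one kernel-verified Lean document; each statement's English description precedes it below -/
import Mathlib

section
/- Let V be a finite set and C a finite collection of subsets of V with weights x_i ∈ [0,1] satisfying ∑_{i : u ∈ C_i} x_i ≤ 1 for each u ∈ V, and profits λ_i > 0. Suppose every team has size at most ρ. Define two teams to be adjacent if they share a common element. Then the greedy procedure that repeatedly selects a remaining team of maximum profit and removes it together with all teams adjacent to it produces a pairwise-disjoint family S with ∑_{i ∈ S} λ_i ≥ (1/ρ) · ∑_i x_i λ_i. -/
open Finset

/-- Greedy rounding guarantee: if `S` is the output of the greedy procedure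
(pairwise disjoint, and every team is dominated by some selected team that is
adjacent to it and has at least as large a profit), then the total profit of `S`
is at least `(1/ρ)` times the fractional objective. -/
theorem stmt_1 {V ι : Type*} [Fintype V] [Fintype ι] [DecidableEq V]
    (C : ι → Finset V) (hne : ∀ i, (C i).Nonempty)
    (ρ : ℝ) (hρ : 0 < ρ) (hsize : ∀ i, ((C i).card : ℝ) ≤ ρ)
    (lam : ι → ℝ) (hlam : ∀ i, 0 < lam i)
    (x : ι → ℝ) (hx : ∀ i, 0 ≤ x i ∧ x i ≤ 1)
    (hpack : ∀ u : V, ∑ i ∈ univ.filter (fun i => u ∈ C i), x i ≤ 1)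
    (S : Finset ι)
    (hdisj : ∀ i ∈ S, ∀ j ∈ S, i ≠ j → C i ∩ C j = ∅)
    (hgreedy : ∀ j : ι, ∃ i ∈ S, (C i ∩ C j).Nonempty ∧ lam j ≤ lam i) :
    (1 / ρ) * ∑ i, x i * lam i ≤ ∑ i ∈ S, lam i := by
  classical
  -- choice of dominating team
  choose f hfS hfint hflam using hgreedy
  -- key: for any i, the total fractional weight of teams adjacent to i is ≤ ρ
  have key : ∀ i : ι, ∑ j ∈ univ.filter (fun j => (C i ∩ C j).Nonempty), x j ≤ ρ := by
    intro i
    set T := univ.filter (fun j => (C i ∩ C j).Nonempty) with hT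
    calc ∑ j ∈ T, x j ≤ ∑ j ∈ T, ∑ u ∈ C i ∩ C j, x j := by
          apply Finset.sum_le_sum
          intro j hj
          rw [Finset.sum_const, nsmul_eq_mul]
          have hcard : (1 : ℝ) ≤ ((C i ∩ C j).card : ℝ) := by
            have : 0 < (C i ∩ C j).card := Finset.card_pos.mpr
              (by simpa [hT] using (Finset.mem_filter.mp hj).2)
            exact_mod_cast this
          nlinarith [(hx j).1]
      _ = ∑ j ∈ T, ∑ u ∈ C i, (if u ∈ C j then x j else 0) := by
          apply Finset.sum_congr rfl
          intro j _
          rw [Finset.sum_ite_mem]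
      _ = ∑ u ∈ C i, ∑ j ∈ T, (if u ∈ C j then x j else 0) := Finset.sum_comm
      _ ≤ ∑ u ∈ C i, (1 : ℝ) := by
          apply Finset.sum_le_sum
          intro u _
          calc ∑ j ∈ T, (if u ∈ C j then x j else 0)
              ≤ ∑ j ∈ univ, (if u ∈ C j then x j else 0) := by
                apply Finset.sum_le_sum_of_subset_of_nonneg (Finset.subset_univ _)
                intro j _ _
                split <;> simp [(hx j).1]
            _ = ∑ j ∈ univ.filter (fun j => u ∈ C j), x j := by
                rw [Finset.sum_filter]
            _ ≤ 1 := hpack u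
      _ = ((C i).card : ℝ) := by simp
      _ ≤ ρ := hsize i
  have main : ∑ i, x i * lam i ≤ ρ * ∑ i ∈ S, lam i := by
    calc ∑ i, x i * lam i
        = ∑ i ∈ S, ∑ j ∈ univ.filter (fun j => f j = i), x j * lam j := by
          exact (Finset.sum_fiberwise_of_maps_to (fun j _ => hfS j) _).symm
      _ ≤ ∑ i ∈ S, ρ * lam i := by
          apply Finset.sum_le_sum
          intro i hi
          calc ∑ j ∈ univ.filter (fun j => f j = i), x j * lam j
              ≤ ∑ j ∈ univ.filter (fun j => f j = i), x j * lam i := by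
                apply Finset.sum_le_sum
                intro j hj
                have hji : f j = i := (Finset.mem_filter.mp hj).2
                have := hflam j
                rw [hji] at this
                exact mul_le_mul_of_nonneg_left this (hx j).1
            _ = (∑ j ∈ univ.filter (fun j => f j = i), x j) * lam i := by
                rw [Finset.sum_mul]
            _ ≤ ρ * lam i := by
                apply mul_le_mul_of_nonneg_right _ (hlam i).le
                refine le_trans (Finset.sum_le_sum_of_subset_of_nonneg ?_
                  (fun j _ _ => (hx j).1)) (key i)
                intro j hj
                have hji : f j = i := (Finset.mem_filter.mp hj).2
                have := hfint j
                rw [hji] at this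
                exact Finset.mem_filter.mpr ⟨Finset.mem_univ _, this⟩
      _ = ρ * ∑ i ∈ S, lam i := by rw [Finset.mul_sum]
  rw [one_div, inv_mul_le_iff₀ hρ]
  exact main
end

section
/- Under the randomized rounding where each team C_i survives phase one independently with probability x_i/(2ρ) and is then kept only if no adjacent surviving team has smaller index, each team C_i is kept with probability at least x_i/(4ρ). Consequently the expected total profit of kept teams is at least (1/(4ρ)) ∑_i x_i λ_i. -/
/-!
Team `C i` is kept when it survives and no earlier team meeting it survives. Double counting
with the packing constraint shows that the teams meeting `C i` have total weight at most
`|C i| ≤ ρ`, so by a union bound some of them survives with probability at most `1/2`. Since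
this event is independent of the survival of `C i`, team `C i` is kept with at least half its
survival probability `x i / (2ρ)`. The profit bound follows by linearity of expectation.
-/

open Finset MeasureTheory ProbabilityTheory

theorem sum_filter_inter_nonempty_le_card {V ι : Type*} [Fintype ι] [DecidableEq V]
    (C : ι → Finset V) {x : ι → ℝ} (hx : ∀ j, 0 ≤ x j)
    (hpack : ∀ u : V, ∑ j ∈ univ.filter (fun j => u ∈ C j), x j ≤ 1) (s : Finset V) :
    ∑ j ∈ univ.filter (fun j => (C j ∩ s).Nonempty), x j ≤ s.card :=
  calc ∑ j ∈ univ.filter (fun j => (C j ∩ s).Nonempty), x j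
      ≤ ∑ j, ((C j ∩ s).card : ℝ) * x j := by
        rw [sum_filter]
        refine sum_le_sum fun j _ => ?_
        split_ifs with h
        · exact le_mul_of_one_le_left (hx j) (mod_cast card_pos.mpr h)
        · exact mul_nonneg (Nat.cast_nonneg _) (hx j)
    _ = ∑ u ∈ s, ∑ j ∈ univ.filter (fun j => u ∈ C j), x j := by
        simp only [sum_filter]
        rw [sum_comm]
        refine sum_congr rfl fun j _ => ?_
        rw [← sum_filter, filter_mem_eq_inter, inter_comm, sum_const, nsmul_eq_mul]
    _ ≤ ∑ _u ∈ s, (1 : ℝ) := sum_le_sum fun u _ => hpack u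
    _ = s.card := by simp

namespace ProbabilityTheory

variable {Ω ι : Type*} [MeasurableSpace Ω] {μ : Measure Ω} {A : ι → Set Ω}

theorem iIndepSet.measure_le_measure_diff_biUnion_add (h : iIndepSet A μ) {i : ι}
    {S : Finset ι} (hi : i ∉ S) :
    μ (A i) ≤ μ (A i \ ⋃ j ∈ S, A j) + μ (A i) * ∑ j ∈ S, μ (A j) := by
  classical
  have hpair : ∀ j ∈ S, μ (A i ∩ A j) = μ (A i) * μ (A j) := fun j hj => by
    have hij : i ∉ ({j} : Finset ι) := by simpa using (ne_of_mem_of_not_mem hj hi).symm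
    simpa [set_biInter_insert, prod_insert hij] using h.meas_biInter {i, j}
  calc μ (A i) ≤ μ (A i \ ⋃ j ∈ S, A j) + μ (A i ∩ ⋃ j ∈ S, A j) := by
        conv_lhs => rw [← Set.sdiff_union_inter (A i) (⋃ j ∈ S, A j)]
        exact measure_union_le _ _
    _ ≤ μ (A i \ ⋃ j ∈ S, A j) + ∑ j ∈ S, μ (A i ∩ A j) := by
        rw [Set.inter_iUnion₂]
        gcongr
        exact measure_biUnion_finset_le _ _
    _ = μ (A i \ ⋃ j ∈ S, A j) + μ (A i) * ∑ j ∈ S, μ (A j) := by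
        rw [sum_congr rfl hpair, mul_sum]

theorem iIndepSet.measure_div_two_le_measure_diff_biUnion [IsFiniteMeasure μ]
    (h : iIndepSet A μ) {i : ι} {S : Finset ι} (hi : i ∉ S)
    (hS : ∑ j ∈ S, μ (A j) ≤ 2⁻¹) :
    μ (A i) / 2 ≤ μ (A i \ ⋃ j ∈ S, A j) := by
  have hle : μ (A i) / 2 + μ (A i) / 2 ≤ μ (A i \ ⋃ j ∈ S, A j) + μ (A i) / 2 :=
    calc μ (A i) / 2 + μ (A i) / 2 = μ (A i) := ENNReal.add_halves _
      _ ≤ μ (A i \ ⋃ j ∈ S, A j) + μ (A i) * ∑ j ∈ S, μ (A j) :=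
          h.measure_le_measure_diff_biUnion_add hi
      _ ≤ μ (A i \ ⋃ j ∈ S, A j) + μ (A i) / 2 := by
          rw [ENNReal.div_eq_inv_mul, mul_comm]
          gcongr
  exact (ENNReal.add_le_add_iff_right
    (ENNReal.div_ne_top (measure_ne_top μ _) two_ne_zero)).mp hle

end ProbabilityTheory

section Rounding

variable {V ι : Type*} [Fintype ι] [LinearOrder ι] [DecidableEq V]

def earlierAdjacent (C : ι → Finset V) (i : ι) : Finset ι :=
  univ.filter (fun j => j < i ∧ (C j ∩ C i).Nonempty)

theorem sum_earlierAdjacent_le_card (C : ι → Finset V) {x : ι → ℝ} (hx : ∀ j, 0 ≤ x j)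
    (hpack : ∀ u : V, ∑ j ∈ univ.filter (fun j => u ∈ C j), x j ≤ 1) (i : ι) :
    ∑ j ∈ earlierAdjacent C i, x j ≤ (C i).card :=
  (sum_le_sum_of_subset_of_nonneg (monotone_filter_right _ fun _ _ => And.right)
    fun j _ _ => hx j).trans (sum_filter_inter_nonempty_le_card C hx hpack _)

theorem ofReal_div_four_le_measure_kept {Ω : Type*} [MeasurableSpace Ω] {μ : Measure Ω}
    [IsFiniteMeasure μ] (C : ι → Finset V) {ρ : ℝ} (hρ : 0 < ρ)
    (hsize : ∀ j, ((C j).card : ℝ) ≤ ρ) {x : ι → ℝ} (hx : ∀ j, 0 ≤ x j)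
    (hpack : ∀ u : V, ∑ j ∈ univ.filter (fun j => u ∈ C j), x j ≤ 1)
    {A : ι → Set Ω} (hindep : iIndepSet A μ)
    (hprob : ∀ j, μ (A j) = ENNReal.ofReal (x j / (2 * ρ))) (i : ι) :
    ENNReal.ofReal (x i / (4 * ρ)) ≤ μ (A i \ ⋃ j ∈ earlierAdjacent C i, A j) := by
  have hmass : ∑ j ∈ earlierAdjacent C i, μ (A j) ≤ 2⁻¹ := by
    rw [sum_congr rfl fun j _ => hprob j,
      ← ENNReal.ofReal_sum_of_nonneg fun j _ => div_nonneg (hx j) (by positivity),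
      ← sum_div, ← ENNReal.ofReal_ofNat 2, ← ENNReal.ofReal_inv_of_pos two_pos]
    gcongr
    rw [div_le_iff₀ (by positivity)]
    linarith [sum_earlierAdjacent_le_card C hx hpack i, hsize i]
  calc ENNReal.ofReal (x i / (4 * ρ)) = μ (A i) / 2 := by
        rw [hprob i, ← ENNReal.ofReal_ofNat 2, ← ENNReal.ofReal_div_of_pos two_pos, div_div,
          mul_comm _ (2 : ℝ), ← mul_assoc]
        norm_num
    _ ≤ μ (A i \ ⋃ j ∈ earlierAdjacent C i, A j) :=
        hindep.measure_div_two_le_measure_diff_biUnion (by simp [earlierAdjacent]) hmass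

end Rounding

theorem stmt_4_general {Ω V ι : Type*} [MeasurableSpace Ω] [Fintype ι]
    [LinearOrder ι] [DecidableEq V]
    (μ : Measure Ω) [IsProbabilityMeasure μ]
    (C : ι → Finset V)
    (ρ : ℝ) (hρ : 0 < ρ) (hsize : ∀ j, ((C j).card : ℝ) ≤ ρ)
    (x lam : ι → ℝ) (hx : ∀ j, 0 ≤ x j ∧ x j ≤ 1) (hlam : ∀ j, 0 ≤ lam j)
    (hpack : ∀ u : V, ∑ j ∈ univ.filter (fun j => u ∈ C j), x j ≤ 1)
    (A : ι → Set Ω)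
    (hindep : iIndepSet A μ)
    (hprob : ∀ j, μ (A j) = ENNReal.ofReal (x j / (2 * ρ)))
    (K : ι → Set Ω)
    (hK : ∀ i, K i = A i ∩ ⋂ j ∈ {j : ι | j < i ∧ (C j ∩ C i).Nonempty}, (A j)ᶜ) :
    (∀ i, ENNReal.ofReal (x i / (4 * ρ)) ≤ μ (K i))
    ∧ (1 / (4 * ρ)) * ∑ i, x i * lam i ≤ ∑ i, lam i * (μ (K i)).toReal := by
  have hkeep : ∀ i, ENNReal.ofReal (x i / (4 * ρ)) ≤ μ (K i) := fun i => by
    have hKi : K i = A i \ ⋃ j ∈ earlierAdjacent C i, A j := by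
      ext ω
      simp [hK i, earlierAdjacent, Set.sdiff_eq]
    exact hKi ▸
      ofReal_div_four_le_measure_kept C hρ hsize (fun j => (hx j).1) hpack hindep hprob i
  refine ⟨hkeep, ?_⟩
  rw [mul_sum]
  refine sum_le_sum fun i _ => ?_
  have hi := (ENNReal.ofReal_le_iff_le_toReal (measure_ne_top μ _)).mp (hkeep i)
  calc 1 / (4 * ρ) * (x i * lam i) = lam i * (x i / (4 * ρ)) := by ring
    _ ≤ lam i * (μ (K i)).toReal := mul_le_mul_of_nonneg_left hi (hlam i)

/-- Randomized rounding: each team is kept (survives phase one and no adjacent surviving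
team has smaller index) with probability at least `x i/(4ρ)`, hence the expected total
profit of kept teams is at least `(1/(4ρ)) ∑ x i λ i`. -/
theorem stmt_4 {Ω V ι : Type*} [MeasurableSpace Ω] [Fintype V] [Fintype ι]
    [LinearOrder ι] [DecidableEq V]
    (μ : Measure Ω) [IsProbabilityMeasure μ]
    (C : ι → Finset V)
    (ρ : ℝ) (hρ : 0 < ρ) (hsize : ∀ j, ((C j).card : ℝ) ≤ ρ)
    (x lam : ι → ℝ) (hx : ∀ j, 0 ≤ x j ∧ x j ≤ 1) (hlam : ∀ j, 0 ≤ lam j)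
    (hpack : ∀ u : V, ∑ j ∈ univ.filter (fun j => u ∈ C j), x j ≤ 1)
    (A : ι → Set Ω) (hA : ∀ j, MeasurableSet (A j))
    (hindep : iIndepSet A μ)
    (hprob : ∀ j, μ (A j) = ENNReal.ofReal (x j / (2 * ρ)))
    (K : ι → Set Ω)
    (hK : ∀ i, K i = A i ∩ ⋂ j ∈ {j : ι | j < i ∧ (C j ∩ C i).Nonempty}, (A j)ᶜ) :
    (∀ i, ENNReal.ofReal (x i / (4 * ρ)) ≤ μ (K i))
    ∧ (1 / (4 * ρ)) * ∑ i, x i * lam i ≤ ∑ i, lam i * (μ (K i)).toReal :=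
  stmt_4_general μ C ρ hρ hsize x lam hx hlam hpack A hindep hprob K hK
end

section
/- Capacitated greedy rounding bound: let C_{ti} be a team of maximum profit among remaining teams, with all team sizes at most ρ, x a feasible fractional solution of the capacitated LP, and let δ ≤ 1 − x_{ti} be the total amount of fractional value removed from other teams of task t to restore ∑_j x_{tj} ≤ g_t after setting x_{ti} = 1. Then (1+ρ)·λ_t ≥ x_{ti}·λ_t + ∑_{C_{lj} adjacent to C_{ti}} x_{lj}·λ_l + δ·λ_t. -/
open Finset

/-- Capacitated greedy rounding bound: if team `i` (of task `τ i`) has maximal profit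
among its adjacent teams, team sizes are at most ρ, `x` is a feasible fractional packing
and `0 ≤ δ ≤ 1 - x i`, then
`(1+ρ)·λ_{τ i} ≥ x i·λ_{τ i} + ∑_{adjacent j} x j·λ_{τ j} + δ·λ_{τ i}`. -/
theorem stmt_12 {V ι T : Type*} [Fintype V] [Fintype ι] [DecidableEq V] [DecidableEq ι]
    (C : ι → Finset V) (τ : ι → T) (lam : T → ℝ) (hlam : ∀ t, 0 < lam t)
    (ρ : ℝ) (hρ : 0 < ρ) (hsize : ∀ j, ((C j).card : ℝ) ≤ ρ)
    (x : ι → ℝ) (hx : ∀ j, 0 ≤ x j ∧ x j ≤ 1)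
    (hpack : ∀ u : V, ∑ j ∈ univ.filter (fun j => u ∈ C j), x j ≤ 1)
    (i : ι)
    (hmax : ∀ j, (C j ∩ C i).Nonempty → lam (τ j) ≤ lam (τ i))
    (δ : ℝ) (hδ0 : 0 ≤ δ) (hδ : δ ≤ 1 - x i) :
    x i * lam (τ i)
      + (∑ j ∈ univ.filter (fun j => j ≠ i ∧ (C j ∩ C i).Nonempty), x j * lam (τ j))
      + δ * lam (τ i)
      ≤ (1 + ρ) * lam (τ i) := by
  set S := univ.filter (fun j => j ≠ i ∧ (C j ∩ C i).Nonempty) with hS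
  have hxsum : ∑ j ∈ S, x j ≤ ρ := by
    have key : ∑ j ∈ S, x j ≤ ∑ u ∈ C i, ∑ j ∈ univ.filter (fun j => u ∈ C j), x j := by
      have hrhs : ∑ u ∈ C i, ∑ j ∈ univ.filter (fun j => u ∈ C j), x j
          = ∑ j ∈ univ, ((C j ∩ C i).card : ℝ) * x j := by
        simp_rw [Finset.sum_filter]
        rw [Finset.sum_comm]
        refine Finset.sum_congr rfl fun j _ => ?_
        rw [Finset.sum_ite_mem, Finset.sum_const,
          Finset.inter_comm, nsmul_eq_mul]
      rw [hrhs]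
      calc ∑ j ∈ S, x j ≤ ∑ j ∈ S, ((C j ∩ C i).card : ℝ) * x j := by
            refine Finset.sum_le_sum fun j hj => ?_
            simp only [hS, mem_filter] at hj
            have h1 : (1 : ℝ) ≤ ((C j ∩ C i).card : ℝ) := by
              exact_mod_cast Finset.card_pos.mpr hj.2.2
            nlinarith [(hx j).1]
        _ ≤ ∑ j ∈ univ, ((C j ∩ C i).card : ℝ) * x j := by
            exact Finset.sum_le_sum_of_subset_of_nonneg (Finset.subset_univ _)
              fun j _ _ => mul_nonneg (Nat.cast_nonneg _) (hx j).1
    calc ∑ j ∈ S, x j ≤ ∑ u ∈ C i, ∑ j ∈ univ.filter (fun j => u ∈ C j), x j := key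
      _ ≤ ∑ u ∈ C i, 1 := Finset.sum_le_sum fun u _ => hpack u
      _ = ((C i).card : ℝ) := by simp
      _ ≤ ρ := hsize i
  have hmid : ∑ j ∈ S, x j * lam (τ j) ≤ ρ * lam (τ i) := by
    calc ∑ j ∈ S, x j * lam (τ j) ≤ ∑ j ∈ S, x j * lam (τ i) := by
          refine Finset.sum_le_sum fun j hj => ?_
          simp only [hS, mem_filter] at hj
          exact mul_le_mul_of_nonneg_left (hmax j hj.2.2) (hx j).1
      _ = (∑ j ∈ S, x j) * lam (τ i) := by rw [Finset.sum_mul]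
      _ ≤ ρ * lam (τ i) := mul_le_mul_of_nonneg_right hxsum (hlam _).le
  nlinarith [hlam (τ i), (hx i).1]
end
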